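/- arXiv:1012.3818 — 3 statements merged into one kernel-verified Lean document; each statement's English description precedes it below -/
import Mathlib

section
/- Let f ∈ ℂ[t] be a non-constant polynomial, let A be the localization of the polynomial ring ℂ[t] away from the derivative f′, and let δ : A → A be the unique derivation extending d/dt. Then the additive map Φ on the module A((u)) of formal Laurent series in u with coefficients in A, defined by Φ(∑_k φ_k u^k) = ∑_k (δ(φ_{k−1}) − f′·φ_k) u^k (that is, Φ = u·δ − f′ with δ acting coefficientwise), is bijective. Equivalently, the formal twisted de Rham complex A((u)) → A((u)) given by u∂_t − f′ has zero cohomology in both degrees. -/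
/-!
Since `g = f'` is a unit of `A`, the coefficient equation `δ φ_{k-1} - g φ_k = ψ_k` determines
`φ_k = g⁻¹ (δ φ_{k-1} - ψ_k)` from `φ_{k-1}`. A Laurent series vanishes below its order, so the
recursion can be started there, giving a preimage of `ψ`; at the order of a nonzero `φ` the
same equation reads `(Φ φ)_k = -g φ_k ≠ 0`, so `Φ` is injective.
-/

namespace HahnSeries

variable {R : Type*} [Ring R]

noncomputable def shiftEqSolution (δ : R →+ R) (v : R) (y : HahnSeries ℤ R) (k : ℤ) : R :=
  if _ : k < y.order then 0 else v * (δ (shiftEqSolution δ v y (k - 1)) - y.coeff k)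
termination_by (k + 1 - y.order).toNat
decreasing_by omega

variable (δ : R →+ R) (v : R) (y : HahnSeries ℤ R)

theorem shiftEqSolution_of_lt {k : ℤ} (hk : k < y.order) : shiftEqSolution δ v y k = 0 := by
  rw [shiftEqSolution, dif_pos hk]

theorem shiftEqSolution_of_le {k : ℤ} (hk : y.order ≤ k) :
    shiftEqSolution δ v y k = v * (δ (shiftEqSolution δ v y (k - 1)) - y.coeff k) := by
  rw [shiftEqSolution, dif_neg (not_lt.mpr hk)]

theorem bddBelow_support_shiftEqSolution : BddBelow (Function.support (shiftEqSolution δ v y)) :=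
  ⟨y.order, fun _ hk ↦ not_lt.mp fun h ↦ hk (shiftEqSolution_of_lt δ v y h)⟩

theorem shiftEqSolution_spec {g : R} (hgv : g * v = 1) (k : ℤ) :
    δ (shiftEqSolution δ v y (k - 1)) - g * shiftEqSolution δ v y k = y.coeff k := by
  rcases lt_or_ge k y.order with hk | hk
  · rw [shiftEqSolution_of_lt δ v y hk, shiftEqSolution_of_lt δ v y (by omega),
      coeff_eq_zero_of_lt_order hk, map_zero, mul_zero, sub_zero]
  · rw [shiftEqSolution_of_le δ v y hk, ← mul_assoc, hgv, one_mul, sub_sub_cancel]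

variable {δ} {g : R} {Φ : HahnSeries ℤ R →+ HahnSeries ℤ R}

theorem injective_of_coeff_eq_shift_sub_mul (hg : IsUnit g)
    (hΦ : ∀ x k, (Φ x).coeff k = δ (x.coeff (k - 1)) - g * x.coeff k) :
    Function.Injective Φ := by
  refine (injective_iff_map_eq_zero Φ).mpr fun x hx ↦ ?_
  have h := hΦ x x.order
  rw [hx, coeff_eq_zero_of_lt_order (by omega : x.order - 1 < x.order), map_zero, zero_sub,
    coeff_zero, zero_eq_neg, hg.mul_right_eq_zero] at h
  exact coeff_order_eq_zero.mp h

theorem surjective_of_coeff_eq_shift_sub_mul (hg : IsUnit g)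
    (hΦ : ∀ x k, (Φ x).coeff k = δ (x.coeff (k - 1)) - g * x.coeff k) :
    Function.Surjective Φ := by
  obtain ⟨u, rfl⟩ := hg
  intro y
  refine ⟨ofSuppBddBelow _ (bddBelow_support_shiftEqSolution δ ↑u⁻¹ y), ?_⟩
  ext k
  rw [hΦ, coeff_ofSuppBddBelow]
  exact shiftEqSolution_spec δ _ y u.mul_inv k

theorem bijective_of_coeff_eq_shift_sub_mul (hg : IsUnit g)
    (hΦ : ∀ x k, (Φ x).coeff k = δ (x.coeff (k - 1)) - g * x.coeff k) :
    Function.Bijective Φ :=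
  ⟨injective_of_coeff_eq_shift_sub_mul hg hΦ, surjective_of_coeff_eq_shift_sub_mul hg hΦ⟩

end HahnSeries

theorem stmt_0_general (f : Polynomial ℂ)
    (δ : Derivation ℂ (Localization.Away f.derivative) (Localization.Away f.derivative))
    (Φ : HahnSeries ℤ (Localization.Away f.derivative) →+
         HahnSeries ℤ (Localization.Away f.derivative))
    (hΦ : ∀ (x : HahnSeries ℤ (Localization.Away f.derivative)) (k : ℤ),
      (Φ x).coeff k =
        δ (x.coeff (k - 1)) -
          algebraMap (Polynomial ℂ) (Localization.Away f.derivative) f.derivative *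
            x.coeff k) :
    Function.Bijective Φ :=
  HahnSeries.bijective_of_coeff_eq_shift_sub_mul (δ := δ.toAddMonoidHom)
    (IsLocalization.Away.algebraMap_isUnit f.derivative) hΦ

/-- **Example 1.3 (formal case).** For a non-constant polynomial `f ∈ ℂ[t]`, with
`A = ℂ[t, 1/f']` the localization of `ℂ[t]` away from `f'`, `δ : A → A` the unique
derivation extending `d/dt`, the operator `Φ = u·δ − f'` acting on the formal Laurent
series `A((u))` (with `δ` acting coefficientwise and `u` the shift) is bijective:
the formal twisted de Rham complex `A((u)) → A((u))`, `u∂_t − f'`, has zero cohomology. -/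
theorem stmt_0 (f : Polynomial ℂ) (hf : 0 < f.natDegree)
    (δ : Derivation ℂ (Localization.Away f.derivative) (Localization.Away f.derivative))
    (hδ : ∀ p : Polynomial ℂ,
      δ (algebraMap (Polynomial ℂ) (Localization.Away f.derivative) p) =
        algebraMap (Polynomial ℂ) (Localization.Away f.derivative) p.derivative)
    (Φ : HahnSeries ℤ (Localization.Away f.derivative) →+
         HahnSeries ℤ (Localization.Away f.derivative))
    (hΦ : ∀ (x : HahnSeries ℤ (Localization.Away f.derivative)) (k : ℤ),
      (Φ x).coeff k =
        δ (x.coeff (k - 1)) -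
          algebraMap (Polynomial ℂ) (Localization.Away f.derivative) f.derivative *
            x.coeff k) :
    Function.Bijective Φ :=
  stmt_0_general f δ Φ hΦ
end

section
/- Let f ∈ ℂ[t] be a non-constant polynomial, let A be the localization of the polynomial ring ℂ[t] away from the derivative f′, and let δ : A → A be the unique derivation extending d/dt. Then the additive map Φ on the module A[u, u⁻¹] of Laurent polynomials in u with coefficients in A, defined by Φ(∑_k φ_k u^k) = ∑_k (δ(φ_{k−1}) − f′·φ_k) u^k (that is, Φ = u·δ − f′ with δ acting coefficientwise), is injective. Equivalently, the algebraic twisted de Rham complex A[u,u⁻¹] → A[u,u⁻¹] given by u∂_t − f′ has cohomology only in degree one. -/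
open Polynomial

theorem Finsupp.eq_zero_of_apply_sub_one_eq_zero_imp {M : Type*} [Zero M] (φ : ℤ →₀ M)
    (h : ∀ k, φ (k - 1) = 0 → φ k = 0) : φ = 0 := by
  by_contra hne
  have hsupp : φ.support.Nonempty := Finsupp.support_nonempty_iff.mpr hne
  have hmin : φ.support.min' hsupp ∈ φ.support := φ.support.min'_mem hsupp
  have hpred : φ (φ.support.min' hsupp - 1) = 0 := by
    by_contra hpred
    have := φ.support.min'_le _ (Finsupp.mem_support_iff.mpr hpred)
    omega
  exact Finsupp.mem_support_iff.mp hmin (h _ hpred)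

theorem stmt_1_general (f : Polynomial ℂ)
    (δ : Derivation ℂ (Localization.Away f.derivative) (Localization.Away f.derivative))
    (Φ : (ℤ →₀ Localization.Away f.derivative) →+ (ℤ →₀ Localization.Away f.derivative))
    (hΦ : ∀ (φ : ℤ →₀ Localization.Away f.derivative) (k : ℤ),
      Φ φ k =
        δ (φ (k - 1)) -
          algebraMap (Polynomial ℂ) (Localization.Away f.derivative) f.derivative * φ k) :
    Function.Injective Φ := by
  have hunit : IsUnit (algebraMap (Polynomial ℂ) (Localization.Away f.derivative) f.derivative) :=
    IsLocalization.Away.algebraMap_isUnit _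
  refine (injective_iff_map_eq_zero Φ).mpr fun φ hφ ↦ φ.eq_zero_of_apply_sub_one_eq_zero_imp ?_
  intro k hk
  have hk' := hΦ φ k
  rw [hφ, hk, map_zero, zero_sub, Finsupp.zero_apply, eq_comm, neg_eq_zero] at hk'
  exact hunit.mul_right_eq_zero.mp hk'

/-- **Example 1.3 (algebraic case, injectivity).** For a non-constant polynomial
`f ∈ ℂ[t]`, with `A = ℂ[t, 1/f']` the localization of `ℂ[t]` away from `f'` and
`δ : A → A` the unique derivation extending `d/dt`, the operator `Φ = u·δ − f'`
acting on the Laurent polynomials `A[u, u⁻¹]` (finitely supported `ℤ`-indexed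
families, with `δ` acting coefficientwise and `u` the degree shift) is injective:
the algebraic twisted de Rham complex has cohomology in degree one only. -/
theorem stmt_1 (f : Polynomial ℂ) (hf : 0 < f.natDegree)
    (δ : Derivation ℂ (Localization.Away f.derivative) (Localization.Away f.derivative))
    (hδ : ∀ p : Polynomial ℂ,
      δ (algebraMap (Polynomial ℂ) (Localization.Away f.derivative) p) =
        algebraMap (Polynomial ℂ) (Localization.Away f.derivative) p.derivative)
    (Φ : (ℤ →₀ Localization.Away f.derivative) →+ (ℤ →₀ Localization.Away f.derivative))
    (hΦ : ∀ (φ : ℤ →₀ Localization.Away f.derivative) (k : ℤ),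
      Φ φ k =
        δ (φ (k - 1)) -
          algebraMap (Polynomial ℂ) (Localization.Away f.derivative) f.derivative * φ k) :
    Function.Injective Φ :=
  stmt_1_general f δ Φ hΦ
end

section
/- Let R be a commutative Noetherian ring and let M be a finitely generated R-module. Then the canonical R((u))-linear map R((u)) ⊗_R M → M((u)), sending a ⊗ m to the Laurent series a·m (i.e. determined by sending 1 ⊗ m to the series with coefficient m in degree 0 and extending R((u))-linearly), is bijective. -/
/-!
The map `a ⊗ m ↦ (a_g • m)_g` from `R⟦Γ⟧ ⊗[R] M` to `M⟦Γ⟧` is natural in `M` and bijective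
for `M = Rⁿ`, where both sides are `n`-tuples of Hahn series. Both functors are right exact:
tensoring is, and `M ↦ M⟦Γ⟧` is too, because a Hahn series whose coefficients all lie in
the image of a map lifts to a Hahn series with no larger support (lift `0` to `0`).
A finite presentation `Rᵐ → Rⁿ → M → 0`, which exists since `R` is Noetherian, then gives
bijectivity for `M` by the usual diagram chase.
-/

open scoped TensorProduct

namespace HahnSeries

variable {Γ : Type*} [PartialOrder Γ]

theorem exists_map_eq_of_forall_coeff_mem_range {R S F : Type*} [Zero R] [Zero S]
    [FunLike F R S] [ZeroHomClass F R S] (f : F) {x : HahnSeries Γ S}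
    (hx : ∀ g, x.coeff g ∈ Set.range f) :
    ∃ y : HahnSeries Γ R, y.map f = x := by
  classical
  choose c hc using hx
  refine ⟨⟨fun g => if x.coeff g = 0 then 0 else c g,
    x.isPWO_support.mono fun g hg h0 => hg (if_pos h0)⟩, ?_⟩
  ext g
  by_cases h0 : x.coeff g = 0 <;> simp [h0, hc]

def piAddEquiv {ι : Type*} [Fintype ι] {V : ι → Type*} [∀ i, AddMonoid (V i)] :
    (∀ i, HahnSeries Γ (V i)) ≃+ HahnSeries Γ (∀ i, V i) where
  toFun b := ⟨fun g i => (b i).coeff g,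
    ((Finset.isPWO_bUnion Finset.univ).2 fun i _ => (b i).isPWO_support).mono fun g hg => by
      obtain ⟨i, hi⟩ := Function.ne_iff.1 hg
      exact Set.mem_biUnion (Finset.mem_univ i) hi⟩
  invFun y i := ⟨fun g => y.coeff g i, y.isPWO_support.mono fun g hg h0 => hg (congrFun h0 i)⟩
  left_inv _ := rfl
  right_inv _ := rfl
  map_add' _ _ := rfl

variable {R : Type*} [CommRing R]
variable {M N : Type*} [AddCommGroup M] [Module R M] [AddCommGroup N] [Module R N]

variable (Γ R M) in
def ofTensor : HahnSeries Γ R ⊗[R] M →ₗ[R] HahnSeries Γ M :=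
  TensorProduct.lift <| LinearMap.mk₂ R (fun a m => a.map (LinearMap.toSpanSingleton R M m))
    (fun _ _ _ => by ext; simp [add_smul]) (fun _ _ _ => by ext; simp)
    (fun _ _ _ => by ext; simp) (fun _ _ _ => by
      ext
      simp only [map_coeff, LinearMap.toSpanSingleton_apply, coeff_smul]
      exact smul_comm _ _ _)

@[simp]
theorem coeff_ofTensor_tmul (a : HahnSeries Γ R) (m : M) (g : Γ) :
    (ofTensor Γ R M (a ⊗ₜ m)).coeff g = a.coeff g • m := by
  simp [ofTensor]

theorem ofTensor_lTensor (f : N →ₗ[R] M) (t : HahnSeries Γ R ⊗[R] N) :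
    ofTensor Γ R M (f.lTensor _ t) = (ofTensor Γ R N t).map f := by
  induction t with
  | zero => ext; simp
  | tmul a n => ext; simp
  | add t t' ht ht' => rw [map_add, map_add, ht, ht']; ext; simp

theorem ofTensor_pi_eq (ι : Type*) [Fintype ι] [DecidableEq ι] :
    ⇑(ofTensor Γ R (ι → R)) =
      piAddEquiv ∘ TensorProduct.piScalarRight R R (HahnSeries Γ R) ι := by
  ext t : 1
  induction t with
  | zero => simp
  | tmul a v => ext g i; simp [piAddEquiv, mul_comm]
  | add t t' ht ht' => simp_all

theorem ofTensor_pi_bijective (ι : Type*) [Finite ι] :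
    Function.Bijective (ofTensor Γ R (ι → R)) := by
  classical
  have := Fintype.ofFinite ι
  rw [ofTensor_pi_eq]
  exact piAddEquiv.bijective.comp (LinearEquiv.bijective _)

theorem ofTensor_surjective_of_surjective {F : Type*} [AddCommGroup F] [Module R F]
    (hF : Function.Surjective (ofTensor Γ R F)) {π : F →ₗ[R] M} (hπ : Function.Surjective π) :
    Function.Surjective (ofTensor Γ R M) := by
  intro x
  obtain ⟨y, rfl⟩ := exists_map_eq_of_forall_coeff_mem_range π fun g => hπ (x.coeff g)
  obtain ⟨τ, rfl⟩ := hF y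
  exact ⟨π.lTensor _ τ, ofTensor_lTensor π τ⟩

theorem ofTensor_injective_of_exact {F G : Type*} [AddCommGroup F] [Module R F]
    [AddCommGroup G] [Module R G] (hG : Function.Surjective (ofTensor Γ R G))
    (hF : Function.Injective (ofTensor Γ R F)) {ψ : G →ₗ[R] F} {π : F →ₗ[R] M}
    (hπ : Function.Surjective π) (hexact : Function.Exact ψ π) :
    Function.Injective (ofTensor Γ R M) := by
  rw [injective_iff_map_eq_zero]
  intro t ht
  obtain ⟨τ, rfl⟩ := π.lTensor_surjective (HahnSeries Γ R) hπ t
  have hker : ∀ g, (ofTensor Γ R F τ).coeff g ∈ Set.range ψ := fun g =>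
    (hexact _).1 <| by simpa using congrArg (coeff · g) ((ofTensor_lTensor π τ).symm.trans ht)
  obtain ⟨y, hy⟩ := exists_map_eq_of_forall_coeff_mem_range ψ hker
  obtain ⟨σ, rfl⟩ := hG y
  obtain rfl : ψ.lTensor _ σ = τ := hF ((ofTensor_lTensor ψ σ).trans hy)
  rw [← LinearMap.lTensor_comp_apply, hexact.linearMap_comp_eq_zero, LinearMap.lTensor_zero,
    LinearMap.zero_apply]

theorem ofTensor_bijective [Module.FinitePresentation R M] :
    Function.Bijective (ofTensor Γ R M) := by
  obtain ⟨n, m, π, ψ, hπ, hexact⟩ := Module.FinitePresentation.exists_fin' R M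
  have hF := ofTensor_pi_bijective (Γ := Γ) (R := R) (Fin n)
  exact ⟨ofTensor_injective_of_exact (ofTensor_pi_bijective (Fin m)).2 hF.1 hπ hexact,
    ofTensor_surjective_of_surjective hF.2 hπ⟩

end HahnSeries

/-- **(2.1), module-theoretic content.** For a commutative Noetherian ring `R` and a
finitely generated `R`-module `M`, the canonical map `R((u)) ⊗_R M → M((u))` (sending
`a ⊗ m` to the Laurent series with coefficients `(a_k • m)_k`) is bijective. -/
theorem stmt_4 (R : Type*) [CommRing R] [IsNoetherianRing R]
    (M : Type*) [AddCommGroup M] [Module R M] [Module.Finite R M]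
    (h : LaurentSeries R ⊗[R] M →ₗ[R] HahnSeries ℤ M)
    (hh : ∀ (a : LaurentSeries R) (m : M) (k : ℤ),
      (h (a ⊗ₜ[R] m)).coeff k = a.coeff k • m) :
    Function.Bijective h := by
  obtain rfl : h = HahnSeries.ofTensor ℤ R M :=
    TensorProduct.ext' fun a m => HahnSeries.ext <| funext fun k => by simp [hh]
  have := Module.finitePresentation_of_finite R M
  exact HahnSeries.ofTensor_bijective
end
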